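/- Fix σ > 0 and let (W, U) be a correlated Brownian motion pair with dynamic correlation r. For the estimator γ̂_t of Eq. (3) and the corresponding variance estimators σ̂²_{t,W} and σ̂²_{t,U}, if c > a > 0 and b > 15, then for each fixed integer t ≥ 1 the variances Var(γ̂_t), Var(σ̂²_{t,W}) and Var(σ̂²_{t,U}) all converge to 0 as T → ∞. -/

import Mathlib

open MeasureTheory ProbabilityTheory Filter Finset

/-- A standard Brownian motion sampled at the integer times. -/
structure IsDiscreteBM {Ω : Type*} [MeasureSpace Ω] (X : ℕ → Ω → ℝ) : Prop where
  meas : ∀ t, Measurable (X t)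
  init : ∀ᵐ ω ∂(ℙ : Measure Ω), X 0 ω = 0
  incr : ∀ s t : ℕ, s ≤ t →
    Measure.map (fun ω => X t ω - X s ω) (ℙ : Measure Ω) = gaussianReal 0 ((t - s : ℕ) : NNReal)
  indep_incr : ∀ u : ℕ → ℕ, Monotone u →
    iIndepFun
      (fun i ω => X (u (i + 1)) ω - X (u i) ω) (ℙ : Measure Ω)

/-- Independence of two processes (as functions into `ℕ → ℝ`). -/
def ProcIndep {Ω : Type*} [MeasureSpace Ω] (A B : ℕ → Ω → ℝ) : Prop :=
  IndepFun (fun ω t => A t ω) (fun ω t => B t ω) (ℙ : Measure Ω)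

/-- A correlated Brownian motion pair with dynamic correlation `ρ`. -/
structure IsCorrBMPair {Ω : Type*} [MeasureSpace Ω] (ρ : ℕ → ℝ) (X Y : ℕ → Ω → ℝ) : Prop where
  bound : ∀ t, |ρ t| ≤ 1
  bmX : IsDiscreteBM X
  bmY : IsDiscreteBM Y
  rep : ∃ X1 Y1 : ℕ → Ω → ℝ, IsDiscreteBM X1 ∧ IsDiscreteBM Y1 ∧
    ProcIndep X1 Y ∧ ProcIndep Y1 X ∧
    (∀ t, ∀ᵐ ω ∂(ℙ : Measure Ω),
      X t ω = ρ t * Y t ω + Real.sqrt (1 - ρ t ^ 2) * X1 t ω) ∧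
    (∀ t, ∀ᵐ ω ∂(ℙ : Measure Ω),
      Y t ω = ρ t * X t ω + Real.sqrt (1 - ρ t ^ 2) * Y1 t ω)

/-- The Eq. (3) covariance estimator `γ̂_t` for a Geometric Brownian motion pair
`(e^{σW}, e^{σU})`; with `U := W` it is the variance estimator `σ̂²_{t,W}`. -/
noncomputable def gbmGammaEq3 {Ω : Type*} [MeasureSpace Ω] (σ a b c : ℝ) (W U : ℕ → Ω → ℝ)
    (T t : ℕ) (ω : Ω) : ℝ :=
  Real.exp (-(c * σ ^ 2 * T)) * ∑ k ∈ Finset.Icc 1 T,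
    (Real.exp (a * σ ^ 2 * k) *
        ((Real.exp (σ * W t ω) - Real.exp (σ ^ 2 * t / 2))
          * (Real.exp (σ * U t ω) - Real.exp (σ ^ 2 * t / 2)))
      - Real.exp (-(b * σ ^ 2 * k)) *
        ((Real.exp (σ * W k ω) - Real.exp (σ ^ 2 * k / 2))
          * (Real.exp (σ * U k ω) - Real.exp (σ ^ 2 * k / 2))))

/-- The dynamic correlation `ρ_t` of the Geometric Brownian motion pair
`(e^{σW}, e^{σU})` when `(W,U)` has dynamic correlation `r`. -/
noncomputable def gbmCorr (σ : ℝ) (r : ℕ → ℝ) (t : ℕ) : ℝ :=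
  (Real.exp (r t * σ ^ 2 * t) - 1) / (Real.exp (σ ^ 2 * t) - 1)

/-!
Crude `L²` bounds suffice. For a Brownian motion `X`, the Gaussian moment generating function
gives `‖e^{σX_k} - e^{σ²k/2}‖_{L⁴} ≤ 2 e^{2σ²k}`, so by Hölder each product
`(e^{σX_k} - e^{σ²k/2})(e^{σY_k} - e^{σ²k/2})` has `L²` norm at most `4 e^{4σ²k}`.
Minkowski's inequality then bounds `‖γ̂_t‖_{L²}` by `e^{-cσ²T} T (4 e^{aσ²T + 4σ²t} + 4)`,
where `b ≥ 4` absorbs the growth of the summands at time `k`; this tends to `0` because `c > a`,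
and `Var γ̂_t ≤ 𝔼[γ̂_t²]`.
-/

open scoped NNReal ENNReal

instance : ENNReal.HolderTriple 4 4 2 where
  inv_add_inv_eq_inv := by
    rw [show (4 : ℝ≥0∞) = 2 * 2 by norm_num, ENNReal.mul_inv (by simp) (by simp), ← mul_add,
      ENNReal.inv_two_add_inv_two, mul_one]

lemma lintegral_ofReal_exp_mul_gaussianReal (v : ℝ≥0) (s : ℝ) :
    ∫⁻ x, ENNReal.ofReal (Real.exp (s * x)) ∂gaussianReal 0 v
      = ENNReal.ofReal (Real.exp (s ^ 2 * v / 2)) := by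
  rw [← ofReal_integral_eq_lintegral_ofReal (integrable_exp_mul_gaussianReal s)
    (ae_of_all _ fun x => (Real.exp_pos _).le)]
  have h := congrFun (mgf_id_gaussianReal (μ := 0) (v := v)) s
  simp only [mgf, id] at h
  rw [h]
  ring_nf

namespace ProbabilityTheory.HasLaw

variable {Ω : Type*} {mΩ : MeasurableSpace Ω} {μ : Measure Ω} {X Y : Ω → ℝ} {v : ℝ≥0}

lemma eLpNorm_exp_mul_of_gaussianReal (hX : HasLaw X (gaussianReal 0 v) μ) (s : ℝ)
    {p : ℝ≥0∞} (hp0 : p ≠ 0) (hp : p ≠ ∞) :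
    eLpNorm (fun ω => Real.exp (s * X ω)) p μ
      = ENNReal.ofReal (Real.exp (p.toReal * s ^ 2 * v / 2)) := by
  have hpow : ∀ x : ℝ, ‖Real.exp (s * x)‖ₑ ^ p.toReal
      = ENNReal.ofReal (Real.exp ((p.toReal * s) * x)) := fun x => by
    rw [Real.enorm_eq_ofReal (Real.exp_nonneg _), ENNReal.ofReal_rpow_of_pos (Real.exp_pos _),
      ← Real.exp_mul]
    ring_nf
  rw [eLpNorm_eq_lintegral_rpow_enorm_toReal hp0 hp]
  simp_rw [hpow]
  rw [hX.lintegral_comp (f := fun x => ENNReal.ofReal (Real.exp (p.toReal * s * x))) (by fun_prop)]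
  simp only [lintegral_ofReal_exp_mul_gaussianReal, one_div,
    ENNReal.ofReal_rpow_of_pos (Real.exp_pos _), ← Real.exp_mul]
  congr 2
  field_simp

lemma eLpNorm_exp_mul_sub_le_of_gaussianReal [IsProbabilityMeasure μ]
    (hX : HasLaw X (gaussianReal 0 v) μ) (s : ℝ) {p : ℝ≥0∞} (hp1 : 1 ≤ p) (hp : p ≠ ∞) :
    eLpNorm (fun ω => Real.exp (s * X ω) - Real.exp (s ^ 2 * v / 2)) p μ
      ≤ ENNReal.ofReal (2 * Real.exp (p.toReal * s ^ 2 * v / 2)) := by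
  have hp0 : p ≠ 0 := (zero_lt_one.trans_le hp1).ne'
  have hX' := hX.aemeasurable
  refine (eLpNorm_sub_le (by fun_prop) aestronglyMeasurable_const hp1).trans ?_
  rw [hX.eLpNorm_exp_mul_of_gaussianReal s hp0 hp, eLpNorm_const _ hp0 (NeZero.ne μ),
    measure_univ, ENNReal.one_rpow, mul_one, Real.enorm_eq_ofReal (Real.exp_nonneg _),
    ← ENNReal.ofReal_add (Real.exp_nonneg _) (Real.exp_nonneg _)]
  refine ENNReal.ofReal_le_ofReal ?_
  have : Real.exp (s ^ 2 * v / 2) ≤ Real.exp (p.toReal * s ^ 2 * v / 2) := by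
    gcongr
    have : 1 ≤ p.toReal := by simpa using ENNReal.toReal_mono hp hp1
    nlinarith [mul_nonneg (sq_nonneg s) v.2]
  linarith

lemma eLpNorm_mul_exp_mul_sub_le_of_gaussianReal [IsProbabilityMeasure μ]
    (hX : HasLaw X (gaussianReal 0 v) μ) (hY : HasLaw Y (gaussianReal 0 v) μ) (s : ℝ) :
    eLpNorm (fun ω => (Real.exp (s * X ω) - Real.exp (s ^ 2 * v / 2))
        * (Real.exp (s * Y ω) - Real.exp (s ^ 2 * v / 2))) 2 μ
      ≤ ENNReal.ofReal (4 * Real.exp (4 * s ^ 2 * v)) := by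
  have hX' := hX.aemeasurable
  have hY' := hY.aemeasurable
  have hHolder := eLpNorm_smul_le_mul_eLpNorm (p := 4) (q := 4) (r := 2) (μ := μ)
    (f := fun ω => Real.exp (s * Y ω) - Real.exp (s ^ 2 * v / 2))
    (φ := fun ω => Real.exp (s * X ω) - Real.exp (s ^ 2 * v / 2)) (by fun_prop) (by fun_prop)
  refine (hHolder.trans (mul_le_mul'
    (hX.eLpNorm_exp_mul_sub_le_of_gaussianReal s (by norm_num) (by norm_num))
    (hY.eLpNorm_exp_mul_sub_le_of_gaussianReal s (by norm_num) (by norm_num)))).trans_eq ?_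
  rw [← ENNReal.ofReal_mul (by positivity), show (4 : ℝ≥0∞).toReal = 4 by norm_num]
  congr 1
  rw [mul_mul_mul_comm, ← Real.exp_add]
  ring_nf

end ProbabilityTheory.HasLaw

section Variance

variable {Ω : Type*} {mΩ : MeasurableSpace Ω} {μ : Measure Ω} [IsProbabilityMeasure μ]

lemma variance_le_toReal_eLpNorm_sq {X : Ω → ℝ} (hX : AEStronglyMeasurable X μ) :
    variance X μ ≤ (eLpNorm X 2 μ).toReal ^ 2 := by
  by_cases hX2 : MemLp X 2 μ
  · refine (variance_le_expectation_sq hX).trans_eq ?_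
    rw [hX2.eLpNorm_eq_integral_rpow_norm two_ne_zero ENNReal.ofNat_ne_top,
      ENNReal.toReal_ofReal (by positivity), ← Real.rpow_natCast,
      ← Real.rpow_mul (by positivity)]
    simp
  · rw [variance_of_not_memLp hX hX2]
    positivity

lemma tendsto_variance_zero_of_eLpNorm_le {ι : Type*} {l : Filter ι} {X : ι → Ω → ℝ}
    {B : ι → ℝ} (hX : ∀ i, AEStronglyMeasurable (X i) μ)
    (hXB : ∀ i, eLpNorm (X i) 2 μ ≤ ENNReal.ofReal (B i))
    (hB : Tendsto B l (nhds 0)) :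
    Tendsto (fun i => variance (X i) μ) l (nhds 0) := by
  have hB' : Tendsto (fun i => (ENNReal.ofReal (B i)).toReal ^ 2) l (nhds 0) := by
    simpa using ((ENNReal.tendsto_toReal ENNReal.ofReal_ne_top).comp
      (ENNReal.tendsto_ofReal hB)).pow 2
  refine tendsto_of_tendsto_of_tendsto_of_le_of_le tendsto_const_nhds hB'
    (fun i => variance_nonneg _ _) fun i => (variance_le_toReal_eLpNorm_sq (hX i)).trans ?_
  gcongr
  exacts [ENNReal.ofReal_ne_top, hXB i]

end Variance

lemma tendsto_natCast_mul_exp_neg_mul_atTop {d : ℝ} (hd : 0 < d) :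
    Tendsto (fun T : ℕ => (T : ℝ) * Real.exp (-(d * T))) atTop (nhds 0) := by
  refine (tendsto_self_mul_const_pow_of_lt_one (Real.exp_nonneg (-d))
    (Real.exp_lt_one_iff.2 (neg_lt_zero.2 hd))).congr fun T => ?_
  rw [← Real.exp_nat_mul]
  ring_nf

lemma tendsto_exp_neg_mul_mul_natCast_mul_add {α γ : ℝ} (hα : 0 ≤ α) (hαγ : α < γ) (C D : ℝ) :
    Tendsto (fun T : ℕ => Real.exp (-(γ * T)) * (T * (Real.exp (α * T) * C + D)))
      atTop (nhds 0) := by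
  have h := ((tendsto_natCast_mul_exp_neg_mul_atTop (sub_pos.2 hαγ)).const_mul C).add
    ((tendsto_natCast_mul_exp_neg_mul_atTop (hα.trans_lt hαγ)).const_mul D)
  rw [mul_zero, mul_zero, add_zero] at h
  refine h.congr fun T => ?_
  rw [sub_mul, neg_sub, sub_eq_add_neg, Real.exp_add]
  ring

section Estimator

variable {Ω : Type*} [MeasureSpace Ω] {X Y : ℕ → Ω → ℝ}

lemma IsDiscreteBM.hasLaw (hX : IsDiscreteBM X) (k : ℕ) :
    HasLaw (X k) (gaussianReal 0 k) (ℙ : Measure Ω) where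
  aemeasurable := (hX.meas k).aemeasurable
  map_eq := by
    have hX0 : (fun ω => X k ω - X 0 ω) =ᵐ[(ℙ : Measure Ω)] X k := by
      filter_upwards [hX.init] with ω hω
      simp [hω]
    rw [← Measure.map_congr hX0, hX.incr 0 k k.zero_le, Nat.sub_zero]

noncomputable def centredExpProd (σ : ℝ) (X Y : ℕ → Ω → ℝ) (k : ℕ) (ω : Ω) : ℝ :=
  (Real.exp (σ * X k ω) - Real.exp (σ ^ 2 * k / 2))
    * (Real.exp (σ * Y k ω) - Real.exp (σ ^ 2 * k / 2))

lemma IsDiscreteBM.measurable_centredExpProd (hX : IsDiscreteBM X) (hY : IsDiscreteBM Y)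
    (σ : ℝ) (k : ℕ) : Measurable (centredExpProd σ X Y k) := by
  have := hX.meas k
  have := hY.meas k
  unfold centredExpProd
  fun_prop

lemma gbmGammaEq3_eq_smul_sum (σ a b c : ℝ) (X Y : ℕ → Ω → ℝ) (T t : ℕ) :
    gbmGammaEq3 σ a b c X Y T t = Real.exp (-(c * σ ^ 2 * T)) • ∑ k ∈ Finset.Icc 1 T,
      (Real.exp (a * σ ^ 2 * k) • centredExpProd σ X Y t
        - Real.exp (-(b * σ ^ 2 * k)) • centredExpProd σ X Y k) := by
  ext ω
  simp [gbmGammaEq3, centredExpProd, Finset.sum_apply]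

lemma IsDiscreteBM.measurable_gbmGammaEq3 (hX : IsDiscreteBM X) (hY : IsDiscreteBM Y)
    (σ a b c : ℝ) (T t : ℕ) : Measurable (gbmGammaEq3 σ a b c X Y T t) := by
  have hZ := hX.measurable_centredExpProd hY σ
  rw [gbmGammaEq3_eq_smul_sum]
  fun_prop

variable [IsProbabilityMeasure (ℙ : Measure Ω)]

lemma IsDiscreteBM.eLpNorm_centredExpProd_le (hX : IsDiscreteBM X) (hY : IsDiscreteBM Y)
    (σ : ℝ) (k : ℕ) :
    eLpNorm (centredExpProd σ X Y k) 2 ℙ ≤ ENNReal.ofReal (4 * Real.exp (4 * σ ^ 2 * k)) := by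
  have h := (hX.hasLaw k).eLpNorm_mul_exp_mul_sub_le_of_gaussianReal (hY.hasLaw k) σ
  rw [NNReal.coe_natCast] at h
  exact h

lemma IsDiscreteBM.eLpNorm_gbmGammaEq3_summand_le (hX : IsDiscreteBM X) (hY : IsDiscreteBM Y)
    {σ a b : ℝ} (ha : 0 ≤ a) (hb : 4 ≤ b) {k T : ℕ} (hkT : k ≤ T) (t : ℕ) :
    eLpNorm (Real.exp (a * σ ^ 2 * k) • centredExpProd σ X Y t
        - Real.exp (-(b * σ ^ 2 * k)) • centredExpProd σ X Y k) 2 ℙ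
      ≤ ENNReal.ofReal (Real.exp (a * σ ^ 2 * T) * (4 * Real.exp (4 * σ ^ 2 * t)) + 4) := by
  have hZt := hX.measurable_centredExpProd hY σ t
  have hZk := hX.measurable_centredExpProd hY σ k
  refine (eLpNorm_sub_le (by fun_prop) (by fun_prop) one_le_two).trans ?_
  rw [eLpNorm_const_smul, eLpNorm_const_smul, Real.enorm_eq_ofReal (Real.exp_nonneg _),
    Real.enorm_eq_ofReal (Real.exp_nonneg _)]
  have hdecay : Real.exp (-(b * σ ^ 2 * k)) * (4 * Real.exp (4 * σ ^ 2 * k)) ≤ 4 := by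
    rw [mul_left_comm, ← Real.exp_add]
    refine mul_le_of_le_one_right (by norm_num) (Real.exp_le_one_iff.2 ?_)
    nlinarith [mul_nonneg (sq_nonneg σ) k.cast_nonneg]
  calc _ ≤ ENNReal.ofReal (Real.exp (a * σ ^ 2 * k))
          * ENNReal.ofReal (4 * Real.exp (4 * σ ^ 2 * t))
        + ENNReal.ofReal (Real.exp (-(b * σ ^ 2 * k)))
          * ENNReal.ofReal (4 * Real.exp (4 * σ ^ 2 * k)) := by
        gcongr
        · exact hX.eLpNorm_centredExpProd_le hY σ t
        · exact hX.eLpNorm_centredExpProd_le hY σ k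
    _ = ENNReal.ofReal (Real.exp (a * σ ^ 2 * k) * (4 * Real.exp (4 * σ ^ 2 * t))
        + Real.exp (-(b * σ ^ 2 * k)) * (4 * Real.exp (4 * σ ^ 2 * k))) := by
      rw [← ENNReal.ofReal_mul (Real.exp_nonneg _), ← ENNReal.ofReal_mul (Real.exp_nonneg _),
        ← ENNReal.ofReal_add (by positivity) (by positivity)]
    _ ≤ _ := by gcongr

lemma IsDiscreteBM.eLpNorm_gbmGammaEq3_le (hX : IsDiscreteBM X) (hY : IsDiscreteBM Y)
    {σ a b : ℝ} (c : ℝ) (ha : 0 ≤ a) (hb : 4 ≤ b) (T t : ℕ) :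
    eLpNorm (gbmGammaEq3 σ a b c X Y T t) 2 ℙ ≤ ENNReal.ofReal (Real.exp (-(c * σ ^ 2 * T)) *
      (T * (Real.exp (a * σ ^ 2 * T) * (4 * Real.exp (4 * σ ^ 2 * t)) + 4))) := by
  have hZ := hX.measurable_centredExpProd hY σ
  rw [gbmGammaEq3_eq_smul_sum, eLpNorm_const_smul, Real.enorm_eq_ofReal (Real.exp_nonneg _),
    ENNReal.ofReal_mul (Real.exp_nonneg _), ENNReal.ofReal_mul (Nat.cast_nonneg _),
    ENNReal.ofReal_natCast]
  gcongr
  refine (eLpNorm_sum_le (fun k _ => by fun_prop) one_le_two).trans ?_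
  refine (Finset.sum_le_card_nsmul _ _ _ fun k hk =>
    hX.eLpNorm_gbmGammaEq3_summand_le hY ha hb (Finset.mem_Icc.1 hk).2 t).trans_eq ?_
  simp [nsmul_eq_mul]

lemma IsDiscreteBM.tendsto_variance_gbmGammaEq3 (hX : IsDiscreteBM X) (hY : IsDiscreteBM Y)
    {σ a b c : ℝ} (hσ : 0 < σ) (ha : 0 ≤ a) (hac : a < c) (hb : 4 ≤ b) (t : ℕ) :
    Tendsto (fun T => variance (gbmGammaEq3 σ a b c X Y T t) ℙ) atTop (nhds 0) :=
  tendsto_variance_zero_of_eLpNorm_le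
    (fun T => (hX.measurable_gbmGammaEq3 hY σ a b c T t).aestronglyMeasurable)
    (fun T => hX.eLpNorm_gbmGammaEq3_le hY c ha hb T t)
    (tendsto_exp_neg_mul_mul_natCast_mul_add (by positivity)
      (mul_lt_mul_of_pos_right hac (pow_pos hσ 2)) _ _)

end Estimator

theorem statement9_general {Ω : Type*} [MeasureSpace Ω] [IsProbabilityMeasure (ℙ : Measure Ω)]
    (σ : ℝ) (hσ : 0 < σ) (r : ℕ → ℝ) (W U : ℕ → Ω → ℝ) (h : IsCorrBMPair r W U)
    (a b c : ℝ) (ha : 0 < a) (hac : a < c) (hb : 15 < b) (t : ℕ) :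
    Tendsto (fun T => variance (gbmGammaEq3 σ a b c W U T t) (ℙ : Measure Ω))
      atTop (nhds 0) ∧
    Tendsto (fun T => variance (gbmGammaEq3 σ a b c W W T t) (ℙ : Measure Ω))
      atTop (nhds 0) ∧
    Tendsto (fun T => variance (gbmGammaEq3 σ a b c U U T t) (ℙ : Measure Ω))
      atTop (nhds 0) := by
  have hb4 : 4 ≤ b := by linarith
  exact ⟨h.bmX.tendsto_variance_gbmGammaEq3 h.bmY hσ ha.le hac hb4 t,
    h.bmX.tendsto_variance_gbmGammaEq3 h.bmX hσ ha.le hac hb4 t,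
    h.bmY.tendsto_variance_gbmGammaEq3 h.bmY hσ ha.le hac hb4 t⟩

theorem statement9 {Ω : Type*} [MeasureSpace Ω] [IsProbabilityMeasure (ℙ : Measure Ω)]
    (σ : ℝ) (hσ : 0 < σ) (r : ℕ → ℝ) (W U : ℕ → Ω → ℝ) (h : IsCorrBMPair r W U)
    (a b c : ℝ) (ha : 0 < a) (hac : a < c) (hb : 15 < b) (t : ℕ) (ht : 1 ≤ t) :
    Tendsto (fun T => variance (gbmGammaEq3 σ a b c W U T t) (ℙ : Measure Ω))
      atTop (nhds 0) ∧
    Tendsto (fun T => variance (gbmGammaEq3 σ a b c W W T t) (ℙ : Measure Ω))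
      atTop (nhds 0) ∧
    Tendsto (fun T => variance (gbmGammaEq3 σ a b c U U T t) (ℙ : Measure Ω))
      atTop (nhds 0) :=
  statement9_general σ hσ r W U h a b c ha hac hb t
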